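/- arXiv:math/0511674 — 2 statements merged into one kernel-verified Lean document; each statement's English description precedes it below -/
import Mathlib

section
/- Let $\mathbf{a}$ be an infinite word over a finite alphabet that is a fixed point of a prolongable morphism $\phi$, not eventually periodic, and suppose there exist a letter $a$ and a strictly increasing sequence $(n_k)$ with $|\phi^{n_k}(a)| = \max_j |\phi^{n_k}(j)|$ for all $k$, and suppose the letter $a$ occurs at least twice in $\mathbf{a}$, with prefix of the form $W_1 a W_2 a$. Then $\mathbf{a}$ satisfies Condition $(*)_w$ with $w = 1 + 1/(|W_2|+1)$, witnessed by $U_k = \phi^{n_k}(W_1)$ and $V_k = \phi^{n_k}(a W_2)$; in particular $|U_k|/|V_k| \le |W_1|$ for all $k$. -/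
open scoped BigOperators

/-- `L` is a prefix of the infinite word `a` (0-indexed). -/
def IsPrefixSeq {A : Type*} (a : ℕ → A) (L : List A) : Prop :=
  ∀ i, i < L.length → L.getD i (a 0) = a i

/-- The word `V^w` for a real exponent `w`. -/
noncomputable def wPow {A : Type*} (V : List A) (w : ℝ) : List A :=
  (List.replicate ⌊w⌋₊ V).flatten ++ V.take ⌈(w - (⌊w⌋₊ : ℝ)) * (V.length : ℝ)⌉₊

/-- The sequence `a` is eventually periodic. -/
def EvPeriodic {A : Type*} (a : ℕ → A) : Prop :=
  ∃ r s : ℕ, 0 < s ∧ ∀ k, r ≤ k → a (k + s) = a k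

/-- Condition `(*)_w` of Adamczewski–Bugeaud. -/
noncomputable def ConditionStar {A : Type*} (a : ℕ → A) (w : ℝ) : Prop :=
  ¬ EvPeriodic a ∧
  ∃ U V : ℕ → List A,
    (∀ n, IsPrefixSeq a (U n ++ wPow (V n) w)) ∧
    (∃ C : ℝ, ∀ n, ((U n).length : ℝ) ≤ C * ((V n).length : ℝ)) ∧
    (∀ n, 0 < (V n).length) ∧
    StrictMono fun n => (V n).length

/-- The subword complexity function: number of distinct factors of length `n`. -/
noncomputable def complexity {A : Type*} (a : ℕ → A) (n : ℕ) : ℕ :=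
  Set.ncard {L : List A | ∃ i : ℕ, L = (List.range n).map fun j => a (i + j)}

/-- The action of a morphism (substitution) on finite words. -/
def mapWord {A B : Type*} (φ : A → List B) (L : List A) : List B := L.flatMap φ

/-- `φ` is prolongable on the letter `a0`. -/
def Prolongable {A : Type*} (φ : A → List A) (a0 : A) : Prop :=
  ∃ W : List A, W ≠ [] ∧ φ a0 = a0 :: W ∧ ∀ k : ℕ, (mapWord φ)^[k] W ≠ []

/-!
Since `φ^{n_k}(a)` is the longest image of a letter under `φ^{n_k}`, the word
`V = φ^{n_k}(a W₂)` has length at most `(|W₂| + 1) |φ^{n_k}(a)|`. So the fractional part of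
`V^w`, of length `⌈|V| / (|W₂| + 1)⌉`, is a prefix of `φ^{n_k}(a)`, and `φ^{n_k}(W₁) V^w` is a
prefix of `φ^{n_k}(W₁ a W₂ a)`, itself a prefix of the fixed point. The same comparison gives
`|φ^{n_k}(W₁)| ≤ |W₁| |φ^{n_k}(a)| ≤ |W₁| |V|`, and prolongability makes `|V| > n_k ≥ k`, so a
subsequence has strictly increasing `|V|`.
-/

section Words

variable {A : Type*}

theorem isPrefixSeq_iff (u : ℕ → A) (L : List A) :
    IsPrefixSeq u L ↔ L = (List.range L.length).map u := by
  constructor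
  · intro h
    refine List.ext_getElem (by simp) fun i hi _ => ?_
    rw [List.getElem_map, List.getElem_range, ← h i hi, List.getD_eq_getElem _ _ hi]
  · intro h i hi
    rw [List.getD_eq_getElem _ _ hi]
    simpa using List.getElem_of_eq h hi

theorem IsPrefixSeq.of_prefix {u : ℕ → A} {L L' : List A} (h : IsPrefixSeq u L)
    (hp : L' <+: L) : IsPrefixSeq u L' := by
  obtain ⟨t, rfl⟩ := hp
  intro i hi
  rw [← h i (by rw [List.length_append]; omega), List.getD_append _ _ _ _ hi]

theorem wPow_one_add_inv (V : List A) (L : ℕ) :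
    wPow V (1 + 1 / ((L : ℝ) + 1)) = V ++ V.take ⌈(V.length : ℝ) / ((L : ℝ) + 1)⌉₊ := by
  rcases Nat.eq_zero_or_pos L with rfl | hL
  · norm_num [wPow, List.replicate]
  · have hL' : (1 : ℝ) ≤ L := by exact_mod_cast hL
    have hfrac : 1 / ((L : ℝ) + 1) < 1 := by rw [div_lt_one (by positivity)]; linarith
    have hfloor : ⌊1 + 1 / ((L : ℝ) + 1)⌋₊ = 1 := by
      rw [Nat.floor_eq_iff (by positivity)]
      constructor <;> push_cast <;> linarith [show 0 < 1 / ((L : ℝ) + 1) by positivity]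
    simp only [wPow, hfloor, Nat.cast_one, add_sub_cancel_left, one_div_mul_eq_div]
    simp

theorem wPow_one_add_inv_prefix {V P Q : List A} {L : ℕ} (hV : V = P ++ Q)
    (hlen : V.length ≤ (L + 1) * P.length) :
    wPow V (1 + 1 / ((L : ℝ) + 1)) <+: V ++ P := by
  have hceil : ⌈(V.length : ℝ) / ((L : ℝ) + 1)⌉₊ ≤ P.length := by
    rw [Nat.ceil_le, div_le_iff₀ (by positivity), mul_comm]
    exact_mod_cast hlen
  rw [wPow_one_add_inv, List.prefix_append_right_inj]
  generalize ⌈(V.length : ℝ) / ((L : ℝ) + 1)⌉₊ = ℓ at hceil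
  rw [hV, List.take_append_of_le_length hceil]
  exact List.take_prefix _ _

end Words

section Morphisms

variable {A : Type*} (φ : A → List A)

theorem mapWord_append {B : Type*} (ψ : A → List B) (X Y : List A) :
    mapWord ψ (X ++ Y) = mapWord ψ X ++ mapWord ψ Y :=
  List.flatMap_append

theorem iterate_mapWord_append (m : ℕ) (X Y : List A) :
    (mapWord φ)^[m] (X ++ Y) = (mapWord φ)^[m] X ++ (mapWord φ)^[m] Y := by
  induction m generalizing X Y with
  | zero => rfl
  | succ m ih => simp only [Function.iterate_succ_apply, mapWord_append, ih]

theorem iterate_mapWord_nil (m : ℕ) : (mapWord φ)^[m] ([] : List A) = [] :=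
  Function.iterate_fixed rfl m

theorem length_iterate_mapWord_le {m M : ℕ}
    (h : ∀ j : A, ((mapWord φ)^[m] [j]).length ≤ M) (X : List A) :
    ((mapWord φ)^[m] X).length ≤ X.length * M := by
  induction X with
  | nil => simp [iterate_mapWord_nil]
  | cons c X ih =>
    rw [← List.singleton_append, iterate_mapWord_append, List.length_append]
    simpa [add_mul, add_comm] using Nat.add_le_add (h c) ih

theorem Prolongable.lt_length_iterate {b : A} (h : Prolongable φ b) (m : ℕ) :
    m < ((mapWord φ)^[m] [b]).length := by
  obtain ⟨W, -, hb, hW⟩ := h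
  induction m with
  | zero => simp
  | succ m ih =>
    have hstep : mapWord φ [b] = [b] ++ W := by simp [mapWord, hb]
    have hWpos : 0 < ((mapWord φ)^[m] W).length := List.length_pos_iff.mpr (hW m)
    rw [Function.iterate_succ_apply, hstep, iterate_mapWord_append, List.length_append]
    omega

variable {φ}

theorem IsPrefixSeq.iterate_mapWord {u : ℕ → A}
    (hfix : ∀ n : ℕ, IsPrefixSeq u (mapWord φ ((List.range n).map u)))
    {X : List A} (hX : IsPrefixSeq u X) (m : ℕ) : IsPrefixSeq u ((mapWord φ)^[m] X) :=
  Function.Iterate.rec (IsPrefixSeq u) hX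
    (fun Y hY => by rw [isPrefixSeq_iff] at hY; rw [hY]; exact hfix _) m

variable {a : A} {m : ℕ}

theorem length_iterate_mapWord_le_of_max
    (hmax : ∀ j : A, ((mapWord φ)^[m] [j]).length ≤ ((mapWord φ)^[m] [a]).length) (X W : List A) :
    ((mapWord φ)^[m] X).length ≤ X.length * ((mapWord φ)^[m] ([a] ++ W)).length := by
  refine (length_iterate_mapWord_le φ hmax X).trans (Nat.mul_le_mul_left _ ?_)
  rw [iterate_mapWord_append, List.length_append]
  exact Nat.le_add_right _ _

theorem IsPrefixSeq.iterate_mapWord_wPow {u : ℕ → A}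
    (hmax : ∀ j : A, ((mapWord φ)^[m] [j]).length ≤ ((mapWord φ)^[m] [a]).length)
    (hfix : ∀ n : ℕ, IsPrefixSeq u (mapWord φ ((List.range n).map u)))
    {W1 W2 : List A} (hpre : IsPrefixSeq u (W1 ++ [a] ++ W2 ++ [a])) :
    IsPrefixSeq u ((mapWord φ)^[m] W1 ++
      wPow ((mapWord φ)^[m] ([a] ++ W2)) (1 + 1 / ((W2.length : ℝ) + 1))) := by
  have hV := iterate_mapWord_append φ m [a] W2
  have hlen : ((mapWord φ)^[m] ([a] ++ W2)).length
      ≤ (W2.length + 1) * ((mapWord φ)^[m] [a]).length := by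
    have := length_iterate_mapWord_le φ hmax W2
    rw [hV, List.length_append]
    linarith
  have hsplit : (mapWord φ)^[m] (W1 ++ [a] ++ W2 ++ [a]) = (mapWord φ)^[m] W1 ++
      ((mapWord φ)^[m] ([a] ++ W2) ++ (mapWord φ)^[m] [a]) := by
    simp only [iterate_mapWord_append, List.append_assoc]
  refine (hpre.iterate_mapWord hfix m).of_prefix ?_
  rw [hsplit, List.prefix_append_right_inj]
  exact wPow_one_add_inv_prefix hV hlen

end Morphisms

theorem conditionStar_of_lt_length {A : Type*} {u : ℕ → A} {w : ℝ} (hnp : ¬ EvPeriodic u)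
    (U V : ℕ → List A) (hpre : ∀ k, IsPrefixSeq u (U k ++ wPow (V k) w)) (C : ℕ)
    (hC : ∀ k, (U k).length ≤ C * (V k).length) (hV : ∀ k, k < (V k).length) :
    ConditionStar u w := by
  obtain ⟨ψ, -, hψ⟩ := Filter.strictMono_subseq_of_id_le fun k => (hV k).le
  exact ⟨hnp, U ∘ ψ, V ∘ ψ, fun n => hpre _, ⟨C, fun n => mod_cast hC _⟩,
    fun n => (Nat.zero_le _).trans_lt (hV _), hψ⟩

theorem stmt_11_general {A : Type*} (φ : A → List A) (b0 : A)
    (hpro : Prolongable φ b0)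
    (u : ℕ → A)
    (hfix : ∀ n : ℕ, IsPrefixSeq u (mapWord φ ((List.range n).map u)))
    (hnp : ¬ EvPeriodic u)
    (a : A) (nk : ℕ → ℕ) (hmono : StrictMono nk)
    (hmax : ∀ k, ∀ j : A,
      ((mapWord φ)^[nk k] [j]).length ≤ ((mapWord φ)^[nk k] [a]).length)
    (W1 W2 : List A)
    (hpre : IsPrefixSeq u (W1 ++ [a] ++ W2 ++ [a])) :
    ConditionStar u (1 + 1 / ((W2.length : ℝ) + 1)) ∧
    ∀ k, IsPrefixSeq u ((mapWord φ)^[nk k] W1 ++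
          wPow ((mapWord φ)^[nk k] ([a] ++ W2)) (1 + 1 / ((W2.length : ℝ) + 1))) ∧
        (((mapWord φ)^[nk k] W1).length : ℝ) ≤
          (W1.length : ℝ) * (((mapWord φ)^[nk k] ([a] ++ W2)).length : ℝ) := by
  have hwit k := hpre.iterate_mapWord_wPow (hmax k) hfix
  have hlen k := length_iterate_mapWord_le_of_max (hmax k) W1 W2
  have hgrowth : ∀ k, k < ((mapWord φ)^[nk k] ([a] ++ W2)).length := fun k =>
    calc k ≤ nk k := hmono.le_apply
      _ < ((mapWord φ)^[nk k] [b0]).length := hpro.lt_length_iterate φ _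
      _ ≤ ((mapWord φ)^[nk k] ([a] ++ W2)).length := by
        simpa using length_iterate_mapWord_le_of_max (hmax k) [b0] W2
  exact ⟨conditionStar_of_lt_length hnp _ _ hwit _ hlen hgrowth,
    fun k => ⟨hwit k, mod_cast hlen k⟩⟩

theorem stmt_11 {A : Type*} [Fintype A] (φ : A → List A) (b0 : A)
    (hpro : Prolongable φ b0)
    (u : ℕ → A)
    (hfix : ∀ n : ℕ, IsPrefixSeq u (mapWord φ ((List.range n).map u)))
    (hnp : ¬ EvPeriodic u)
    (a : A) (nk : ℕ → ℕ) (hmono : StrictMono nk) (hpos : ∀ k, 0 < nk k)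
    (hmax : ∀ k, ∀ j : A,
      ((mapWord φ)^[nk k] [j]).length ≤ ((mapWord φ)^[nk k] [a]).length)
    (W1 W2 : List A)
    (hpre : IsPrefixSeq u (W1 ++ [a] ++ W2 ++ [a])) :
    ConditionStar u (1 + 1 / ((W2.length : ℝ) + 1)) ∧
    ∀ k, IsPrefixSeq u ((mapWord φ)^[nk k] W1 ++
          wPow ((mapWord φ)^[nk k] ([a] ++ W2)) (1 + 1 / ((W2.length : ℝ) + 1))) ∧
        (((mapWord φ)^[nk k] W1).length : ℝ) ≤
          (W1.length : ℝ) * (((mapWord φ)^[nk k] ([a] ++ W2)).length : ℝ) :=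
  stmt_11_general φ b0 hpro u hfix hnp a nk hmono hmax W1 W2 hpre
end

section
/- Let $\kappa \ge 2$ and $n \ge 1$ be integers and let $\mathbf{u}$ be an infinite word over a finite alphabet such that some word $M$ of length $n$ occurs at positions $i$ and $j$ with $0 \le i < j \le \kappa n$ within the prefix of length $(\kappa+1)n$. Then there exist finite words $U, V$ with $U V^{1+1/(3\kappa+1)}$ a prefix of $\mathbf{u}$, $|U| \le \kappa n$, and $|V| \ge n/4$. -/
open scoped BigOperators

/-!
Put `d = j - i`. The two occurrences of `M` make the window `u[i, i + n + d)` `d`-periodic,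
hence periodic with any multiple of `d` as period. Take the least multiple `L = (k + 1) d` with
`n ≤ 4L`, and `U = u[0, i)`, `V = u[i, i + L)`. Minimality gives `4kd < n`, which together with
`d ≤ κn` yields `L + L / (3κ + 1) ≤ n + d`: the power `V^(1 + 1/(3κ+1))` stays inside the
periodic window. This single choice of period replaces the case analysis on `d` versus `n`.
-/

section Repetitions

variable {A : Type*}

theorem isPrefixSeq_map_range (u : ℕ → A) (N : ℕ) : IsPrefixSeq u ((List.range N).map u) := by
  intro m hm
  rw [List.getD_eq_getElem _ _ hm]
  simp

theorem wPow_of_one_le_of_lt_two (V : List A) {w : ℝ} (hw1 : 1 ≤ w) (hw2 : w < 2) :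
    wPow V w = V ++ V.take ⌈(w - 1) * V.length⌉₊ := by
  have hfloor : ⌊w⌋₊ = 1 := by
    rw [Nat.floor_eq_iff (by linarith)]
    norm_num [hw1, hw2]
  simp [wPow, hfloor]

theorem apply_add_mul_add_eq_of_shift {u : ℕ → A} {i d n : ℕ}
    (hshift : ∀ m < n, u (i + m) = u (i + d + m)) (t : ℕ) :
    ∀ m, t * d + m < n + d → u (i + t * d + m) = u (i + m) := by
  induction t with
  | zero => simp
  | succ t ih =>
    intro m hm
    rw [add_mul, one_mul] at hm ⊢
    calc u (i + (t * d + d) + m) = u (i + d + (t * d + m)) := by ring_nf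
      _ = u (i + (t * d + m)) := (hshift _ (by omega)).symm
      _ = u (i + m) := by rw [← add_assoc]; exact ih m (by omega)

theorem isPrefixSeq_map_range_append_wPow {u : ℕ → A} {i p : ℕ} {w : ℝ} (hw1 : 1 ≤ w)
    (hw2 : w < 2) (hper : ∀ m : ℕ, (m : ℝ) < (w - 1) * p → u (i + p + m) = u (i + m)) :
    IsPrefixSeq u ((List.range i).map u ++ wPow ((List.range p).map (fun m => u (i + m))) w) := by
  set e := ⌈(w - 1) * p⌉₊
  have hep : e ≤ p := Nat.ceil_le.mpr (by nlinarith [(Nat.cast_nonneg p : (0 : ℝ) ≤ p)])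
  have hword : (List.range i).map u ++
      wPow ((List.range p).map (fun m => u (i + m))) w = (List.range (i + (p + e))).map u := by
    rw [wPow_of_one_le_of_lt_two _ hw1 hw2, List.length_map, List.length_range,
      ← List.map_take, List.take_range, min_eq_left hep]
    simp only [List.range_add, List.map_append, List.map_map]
    refine congrArg _ (congrArg _ (List.map_congr_left fun m hm => ?_))
    simp only [Function.comp, ← add_assoc]
    exact (hper m (by simpa [e, Nat.lt_ceil] using hm)).symm
  rw [hword]
  exact isPrefixSeq_map_range u _

end Repetitions

theorem exists_mul_lt_le_succ_mul {c n : ℕ} (hc : 0 < c) (hn : 0 < n) :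
    ∃ k, k * c < n ∧ n ≤ (k + 1) * c :=
  ⟨(n - 1) / c, by grind [Nat.div_mul_le_self (n - 1) c], by
    grind [Nat.lt_div_mul_add hc (a := n - 1)]⟩

theorem div_add_le_of_mul_lt {κ n d k : ℕ} (hd : d ≤ κ * n) (hk : k * (4 * d) < n) :
    1 / (3 * (κ : ℝ) + 1) * ((k + 1) * d : ℕ) + ((k + 1) * d : ℕ) ≤ n + d := by
  have hnat : (k + 1) * d + (k + 1) * d * (3 * κ + 1) ≤ (n + d) * (3 * κ + 1) := by
    nlinarith
  have hpos : (0 : ℝ) < 3 * κ + 1 := by positivity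
  rw [one_div_mul_eq_div, div_add' _ _ _ hpos.ne', div_le_iff₀ hpos]
  exact_mod_cast hnat

theorem stmt_12_general {A : Type*} (u : ℕ → A) (κ n : ℕ)
    (i j : ℕ) (hij : i < j) (hj : j ≤ κ * n)
    (hocc : ∀ m < n, u (i + m) = u (j + m)) :
    ∃ U V : List A, V ≠ [] ∧
      IsPrefixSeq u (U ++ wPow V (1 + 1 / (3 * (κ : ℝ) + 1))) ∧
      U.length ≤ κ * n ∧ (n : ℝ) / 4 ≤ (V.length : ℝ) := by
  obtain ⟨d, hd, rfl⟩ : ∃ d, 0 < d ∧ j = i + d := ⟨j - i, by omega, by omega⟩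
  have hκn : 0 < κ * n := by omega
  have hκ : (1 : ℝ) ≤ κ := by exact_mod_cast Nat.pos_of_mul_pos_right hκn
  obtain ⟨k, hk_lt, hk_le⟩ := exists_mul_lt_le_succ_mul (by omega : 0 < 4 * d)
    (Nat.pos_of_mul_pos_left hκn)
  have hw2 : 1 + 1 / (3 * (κ : ℝ) + 1) < 2 := by
    have : 1 / (3 * (κ : ℝ) + 1) < 1 := by rw [div_lt_one (by positivity)]; linarith
    linarith
  refine ⟨(List.range i).map u, (List.range ((k + 1) * d)).map (fun m => u (i + m)), ?_,
    isPrefixSeq_map_range_append_wPow (le_add_of_nonneg_right (by positivity)) hw2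
      fun m hm => ?_, ?_, ?_⟩
  · simpa using hd.ne'
  · have hwindow := div_add_le_of_mul_lt (by omega : d ≤ κ * n) hk_lt
    rw [add_sub_cancel_left] at hm
    have hlt : (((k + 1) * d + m : ℕ) : ℝ) < n + d := by push_cast at hm hwindow ⊢; linarith
    exact apply_add_mul_add_eq_of_shift hocc (k + 1) m (by exact_mod_cast hlt)
  · simp only [List.length_map, List.length_range]; omega
  · simp only [List.length_map, List.length_range]
    rw [div_le_iff₀ (by norm_num)]
    exact_mod_cast (by linarith : n ≤ (k + 1) * d * 4)

theorem stmt_12 {A : Type*} (u : ℕ → A) (κ n : ℕ) (hκ : 2 ≤ κ) (hn : 1 ≤ n)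
    (i j : ℕ) (hij : i < j) (hj : j ≤ κ * n)
    (hocc : ∀ m < n, u (i + m) = u (j + m)) :
    ∃ U V : List A, V ≠ [] ∧
      IsPrefixSeq u (U ++ wPow V (1 + 1 / (3 * (κ : ℝ) + 1))) ∧
      U.length ≤ κ * n ∧ (n : ℝ) / 4 ≤ (V.length : ℝ) :=
  stmt_12_general u κ n i j hij hj hocc
end
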